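/- arXiv:2209.05662 — 4 statements merged into one kernel-verified Lean document; each statement's English description precedes it below -/
import Mathlib

section
/- Let b_⊥ : I → ℝ be measurable with ∫_I b_⊥² dμ < ∞ and ∫_I b_⊥ u_n dμ = 0 for every n ∈ {1, …, N}. Then Σ_{n=1}^N E[ ⟨b_⊥, u_n⟩_τ² ] = (N/K)·∫_I b_⊥² dμ. -/
open MeasureTheory ProbabilityTheory
open scoped ENNReal NNReal

/-- Aliasing error identity: if `b⊥ ∈ L²_μ` is orthogonal to every `uₙ`,
then `Σ_n E[⟨b⊥, uₙ⟩_τ²] = (N/K) ∫ b⊥² dμ`. -/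
theorem stmt_6
    {I : Type*} [MeasurableSpace I] (μ : Measure I) [IsProbabilityMeasure μ]
    (N : ℕ) (u : Fin N → I → ℝ)
    (hu_meas : ∀ n, Measurable (u n))
    (hu_ortho : ∀ n m, ∫ y, u n y * u m y ∂μ = if n = m then (1 : ℝ) else 0)
    (w : I → ℝ) (hw : w = fun y => (N : ℝ) / ∑ n, u n y ^ 2)
    (ν : Measure I)
    (hν : ν = μ.withDensity fun y =>
      ENNReal.ofReal ((1 / (N : ℝ)) * ∑ n, u n y ^ 2))
    (hμν : μ ≪ ν)
    (Ω : Type*) [MeasurableSpace Ω] (P : Measure Ω) [IsProbabilityMeasure P]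
    (K : ℕ) (Y : Fin K → Ω → I)
    (hY_meas : ∀ k, Measurable (Y k))
    (hY_law : ∀ k, Measure.map (Y k) P = ν)
    (hY_indep : iIndepFun Y P)
    (bp : I → ℝ) (hbp_meas : Measurable bp)
    (hbp_L2 : Integrable (fun y => bp y ^ 2) μ)
    (hbp_orth : ∀ n, ∫ y, bp y * u n y ∂μ = 0) :
    ∑ n : Fin N, ∫ ω,
        ((1 / (K : ℝ)) * ∑ k, w (Y k ω) * bp (Y k ω) * u n (Y k ω)) ^ 2 ∂P
      = ((N : ℝ) / K) * ∫ y, bp y ^ 2 ∂μ := by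
  rcases Nat.eq_zero_or_pos N with hN | hN
  · subst hN; simp
  rcases Nat.eq_zero_or_pos K with hK | hK
  · subst hK; simp
  have hNR : (0 : ℝ) < N := by exact_mod_cast hN
  have hKR : (0 : ℝ) < K := by exact_mod_cast hK
  set S : I → ℝ := fun y => ∑ n, u n y ^ 2 with hS
  set ρ : I → ℝ := fun y => (1 / (N : ℝ)) * S y with hρ
  have hS_meas : Measurable S := by
    apply Finset.measurable_sum
    intro n _
    exact (hu_meas n).pow_const 2
  have hS_nonneg : ∀ y, 0 ≤ S y := fun y =>
    Finset.sum_nonneg fun n _ => sq_nonneg _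
  have hρ_meas : Measurable ρ := hS_meas.const_mul _
  have hρ_nonneg : ∀ y, 0 ≤ ρ y := fun y =>
    mul_nonneg (by positivity) (hS_nonneg y)
  have hw_meas : Measurable w := by
    rw [hw]; exact Measurable.div measurable_const hS_meas
  have hw_nonneg : ∀ y, 0 ≤ w y := by
    intro y; rw [hw]
    exact div_nonneg (by positivity) (hS_nonneg y)
  have hu2_int : ∀ n, Integrable (fun y => u n y ^ 2) μ := by
    intro n
    have h : Integrable (fun y => u n y * u n y) μ := by
      by_contra h
      have := hu_ortho n n
      rw [integral_undef h] at this
      simp at this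
    simpa [sq] using h
  have hu2_val : ∀ n, ∫ y, u n y ^ 2 ∂μ = 1 := by
    intro n
    have := hu_ortho n n
    simpa [sq] using this
  have hS_int : Integrable S μ := integrable_finset_sum _ fun n _ => hu2_int n
  have hρ_int : Integrable ρ μ := hS_int.const_mul _
  -- μ-a.e., S ≠ 0
  have hmeasS0 : MeasurableSet {y | S y = 0} := hS_meas (measurableSet_singleton 0)
  have hν_S0 : ν {y | S y = 0} = 0 := by
    rw [hν, withDensity_apply _ (show MeasurableSet {y | S y = 0} from hmeasS0)]
    have hz : ∀ᵐ y ∂μ, y ∈ {y | S y = 0} →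
        ENNReal.ofReal ((1 / (N : ℝ)) * ∑ n, u n y ^ 2) = (fun _ => (0 : ℝ≥0∞)) y := by
      refine Filter.Eventually.of_forall fun y hy => ?_
      simp only [Set.mem_setOf_eq] at hy
      simp only
      rw [show (∑ n, u n y ^ 2) = S y from rfl, hy, mul_zero, ENNReal.ofReal_zero]
    rw [setLIntegral_congr_fun_ae hmeasS0 hz, lintegral_zero]
  have hSne : ∀ᵐ y ∂μ, S y ≠ 0 := by
    refine ae_iff.2 ?_
    simpa only [ne_eq, not_not] using hμν hν_S0
  have hρw : ∀ᵐ y ∂μ, ρ y * w y = 1 := by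
    filter_upwards [hSne] with y hy
    rw [hρ, hw]
    simp only
    rw [show (∑ n, u n y ^ 2) = S y from rfl]
    field_simp
  -- w y * u n y ^ 2 ≤ N
  have hwu_le : ∀ (n : Fin N) y, w y * u n y ^ 2 ≤ (N : ℝ) := by
    intro n y
    rcases eq_or_ne (S y) 0 with h | h
    · rw [hw]; simp only
      rw [show (∑ n, u n y ^ 2) = S y from rfl, h, div_zero, zero_mul]
      positivity
    · have hSpos : 0 < S y := lt_of_le_of_ne (hS_nonneg y) (Ne.symm h)
      rw [hw]; simp only
      rw [show (∑ n, u n y ^ 2) = S y from rfl, div_mul_eq_mul_div]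
      rw [div_le_iff₀ hSpos]
      have h1 : u n y ^ 2 ≤ S y :=
        Finset.single_le_sum (f := fun m => u m y ^ 2)
          (fun m _ => sq_nonneg _) (Finset.mem_univ n)
      nlinarith
  -- h n := w * bp^2 * u n ^2 integrable wrt μ
  have hh_int : ∀ n, Integrable (fun y => w y * bp y ^ 2 * u n y ^ 2) μ := by
    intro n
    apply Integrable.mono (hbp_L2.const_mul (N : ℝ))
    · exact ((hw_meas.mul (hbp_meas.pow_const 2)).mul
        ((hu_meas n).pow_const 2)).aestronglyMeasurable
    · refine Filter.Eventually.of_forall fun y => ?_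
      have h1 : (0:ℝ) ≤ w y * bp y ^ 2 * u n y ^ 2 := by
        have := hw_nonneg y; positivity
      rw [Real.norm_eq_abs, Real.norm_eq_abs, abs_of_nonneg h1,
        abs_of_nonneg (by positivity : (0:ℝ) ≤ (N:ℝ) * bp y ^ 2)]
      calc w y * bp y ^ 2 * u n y ^ 2 = (w y * u n y ^ 2) * bp y ^ 2 := by ring
        _ ≤ (N : ℝ) * bp y ^ 2 :=
            mul_le_mul_of_nonneg_right (hwu_le n y) (sq_nonneg _)
  -- bp * u n integrable wrt μ
  have hbpu_int : ∀ n, Integrable (fun y => bp y * u n y) μ := by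
    intro n
    apply Integrable.mono ((hbp_L2.add (hu2_int n)).const_mul (1/2 : ℝ))
    · exact (hbp_meas.mul (hu_meas n)).aestronglyMeasurable
    · refine Filter.Eventually.of_forall fun y => ?_
      simp only [Pi.add_apply]
      rw [Real.norm_eq_abs, Real.norm_eq_abs, abs_mul]
      rw [abs_of_nonneg (by positivity : (0:ℝ) ≤ 1/2 * (bp y ^ 2 + u n y ^ 2))]
      nlinarith [sq_nonneg (|bp y| - |u n y|), sq_abs (bp y), sq_abs (u n y),
        abs_nonneg (bp y), abs_nonneg (u n y)]
  -- integral transfer lemmas for ν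
  have htoNN : Measurable fun y => Real.toNNReal (ρ y) :=
    measurable_real_toNNReal.comp hρ_meas
  have hν' : ν = μ.withDensity fun y => ((Real.toNNReal (ρ y) : ℝ≥0) : ℝ≥0∞) := hν
  have hInt_ν : ∀ f : I → ℝ, ∫ y, f y ∂ν = ∫ y, f y * ρ y ∂μ := by
    intro f
    rw [hν', integral_withDensity_eq_integral_smul htoNN f]
    congr 1
    ext y
    rw [NNReal.smul_def, Real.coe_toNNReal _ (hρ_nonneg y), smul_eq_mul, mul_comm]
  have hν_int_iff : ∀ f : I → ℝ, Integrable f ν ↔ Integrable (fun y => f y * ρ y) μ := by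
    intro f
    rw [hν, integrable_withDensity_iff hρ_meas.ennreal_ofReal
      (Filter.Eventually.of_forall fun y => ENNReal.ofReal_lt_top)]
    apply integrable_congr
    refine Filter.Eventually.of_forall fun y => ?_
    simp only
    rw [ENNReal.toReal_ofReal (hρ_nonneg y)]
  -- the aliasing functions
  have hg_meas : ∀ (n : Fin N), Measurable fun y => w y * bp y * u n y := fun n =>
    (hw_meas.mul hbp_meas).mul (hu_meas n)
  have hg_ae : ∀ (n : Fin N),
      (fun y => (w y * bp y * u n y) * ρ y) =ᵐ[μ] fun y => bp y * u n y := by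
    intro n
    filter_upwards [hρw] with y hy
    linear_combination bp y * u n y * hy
  have hg2_ae : ∀ (n : Fin N),
      (fun y => (w y * bp y * u n y) ^ 2 * ρ y) =ᵐ[μ]
        fun y => w y * bp y ^ 2 * u n y ^ 2 := by
    intro n
    filter_upwards [hρw] with y hy
    linear_combination (w y * bp y ^ 2 * u n y ^ 2) * hy
  have hg_int : ∀ (n : Fin N), Integrable (fun y => w y * bp y * u n y) ν := by
    intro n
    rw [hν_int_iff]
    exact (hbpu_int n).congr (hg_ae n).symm
  have hg2_int : ∀ (n : Fin N), Integrable (fun y => (w y * bp y * u n y) ^ 2) ν := by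
    intro n
    rw [hν_int_iff]
    exact (hh_int n).congr (hg2_ae n).symm
  have hg_mean : ∀ (n : Fin N), ∫ y, w y * bp y * u n y ∂ν = 0 := by
    intro n
    rw [hInt_ν, integral_congr_ae (hg_ae n)]
    exact hbp_orth n
  have hg_sq : ∀ (n : Fin N), ∫ y, (w y * bp y * u n y) ^ 2 ∂ν
      = ∫ y, w y * bp y ^ 2 * u n y ^ 2 ∂μ := by
    intro n
    rw [hInt_ν, integral_congr_ae (hg2_ae n)]
  -- transfer to P via Y k
  have hX_int : ∀ (n : Fin N) (k : Fin K),
      Integrable (fun ω => w (Y k ω) * bp (Y k ω) * u n (Y k ω)) P := by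
    intro n k
    have h := hg_int n
    rw [← hY_law k,
      integrable_map_measure (hg_meas n).aestronglyMeasurable (hY_meas k).aemeasurable] at h
    exact h
  have hX2_int : ∀ (n : Fin N) (k : Fin K),
      Integrable (fun ω => (w (Y k ω) * bp (Y k ω) * u n (Y k ω)) ^ 2) P := by
    intro n k
    have h := hg2_int n
    rw [← hY_law k,
      integrable_map_measure ((hg_meas n).pow_const 2).aestronglyMeasurable
        (hY_meas k).aemeasurable] at h
    exact h
  have hX_mean : ∀ (n : Fin N) (k : Fin K),
      ∫ ω, w (Y k ω) * bp (Y k ω) * u n (Y k ω) ∂P = 0 := by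
    intro n k
    have h := hg_mean n
    rw [← hY_law k, integral_map (hY_meas k).aemeasurable
      (hg_meas n).aestronglyMeasurable] at h
    exact h
  have hX_sq : ∀ (n : Fin N) (k : Fin K),
      ∫ ω, (w (Y k ω) * bp (Y k ω) * u n (Y k ω)) ^ 2 ∂P
        = ∫ y, w y * bp y ^ 2 * u n y ^ 2 ∂μ := by
    intro n k
    have h := (hg_sq n).symm
    rw [← hY_law k, integral_map (hY_meas k).aemeasurable
      ((hg_meas n).pow_const 2).aestronglyMeasurable] at h
    exact h.symm
  -- product integrability and values
  have hprod_int : ∀ (n : Fin N) (k j : Fin K),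
      Integrable (fun ω => (w (Y k ω) * bp (Y k ω) * u n (Y k ω)) *
        (w (Y j ω) * bp (Y j ω) * u n (Y j ω))) P := by
    intro n k j
    rcases eq_or_ne k j with h | h
    · subst h
      have := hX2_int n k
      refine this.congr ?_
      refine Filter.Eventually.of_forall fun ω => ?_
      ring
    · have hind : IndepFun (fun ω => w (Y k ω) * bp (Y k ω) * u n (Y k ω))
          (fun ω => w (Y j ω) * bp (Y j ω) * u n (Y j ω)) P :=
        (hY_indep.indepFun h).comp (hg_meas n) (hg_meas n)
      exact hind.integrable_mul (hX_int n k) (hX_int n j)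
  have hprod_val : ∀ (n : Fin N) (k j : Fin K),
      ∫ ω, (w (Y k ω) * bp (Y k ω) * u n (Y k ω)) *
        (w (Y j ω) * bp (Y j ω) * u n (Y j ω)) ∂P
      = if k = j then ∫ y, w y * bp y ^ 2 * u n y ^ 2 ∂μ else 0 := by
    intro n k j
    rcases eq_or_ne k j with h | h
    · subst h
      rw [if_pos rfl, ← hX_sq n k]
      apply integral_congr_ae
      refine Filter.Eventually.of_forall fun ω => ?_
      ring
    · rw [if_neg h]
      have hind : IndepFun (fun ω => w (Y k ω) * bp (Y k ω) * u n (Y k ω))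
          (fun ω => w (Y j ω) * bp (Y j ω) * u n (Y j ω)) P :=
        (hY_indep.indepFun h).comp (hg_meas n) (hg_meas n)
      have h2 : ∫ ω, (w (Y k ω) * bp (Y k ω) * u n (Y k ω)) *
          (w (Y j ω) * bp (Y j ω) * u n (Y j ω)) ∂P
          = (∫ ω, w (Y k ω) * bp (Y k ω) * u n (Y k ω) ∂P) *
            (∫ ω, w (Y j ω) * bp (Y j ω) * u n (Y j ω) ∂P) :=
        hind.integral_mul_eq_mul_integral (hX_int n k).aestronglyMeasurable (hX_int n j).aestronglyMeasurable
      rw [h2, hX_mean n k, hX_mean n j, mul_zero]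
  -- per-n computation
  have key : ∀ n : Fin N,
      ∫ ω, ((1 / (K : ℝ)) * ∑ k, w (Y k ω) * bp (Y k ω) * u n (Y k ω)) ^ 2 ∂P
        = (1 / (K : ℝ)) * ∫ y, w y * bp y ^ 2 * u n y ^ 2 ∂μ := by
    intro n
    have hexp : ∀ ω : Ω,
        ((1 / (K : ℝ)) * ∑ k, w (Y k ω) * bp (Y k ω) * u n (Y k ω)) ^ 2
        = (1 / (K : ℝ)) ^ 2 * ∑ k, ∑ j, (w (Y k ω) * bp (Y k ω) * u n (Y k ω)) *
            (w (Y j ω) * bp (Y j ω) * u n (Y j ω)) := by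
      intro ω
      rw [mul_pow, sq (∑ k, w (Y k ω) * bp (Y k ω) * u n (Y k ω)),
        Finset.sum_mul_sum]
    calc ∫ ω, ((1 / (K : ℝ)) * ∑ k, w (Y k ω) * bp (Y k ω) * u n (Y k ω)) ^ 2 ∂P
        = ∫ ω, (1 / (K : ℝ)) ^ 2 * ∑ k, ∑ j,
            (w (Y k ω) * bp (Y k ω) * u n (Y k ω)) *
            (w (Y j ω) * bp (Y j ω) * u n (Y j ω)) ∂P := by
          exact integral_congr_ae (Filter.Eventually.of_forall hexp)
      _ = (1 / (K : ℝ)) ^ 2 * ∫ ω, ∑ k, ∑ j,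
            (w (Y k ω) * bp (Y k ω) * u n (Y k ω)) *
            (w (Y j ω) * bp (Y j ω) * u n (Y j ω)) ∂P := integral_const_mul _ _
      _ = (1 / (K : ℝ)) ^ 2 * ∑ k, ∑ j, ∫ ω,
            (w (Y k ω) * bp (Y k ω) * u n (Y k ω)) *
            (w (Y j ω) * bp (Y j ω) * u n (Y j ω)) ∂P := by
          rw [integral_finset_sum _ fun k _ =>
            integrable_finset_sum _ fun j _ => hprod_int n k j]
          congr 1
          refine Finset.sum_congr rfl fun k _ => ?_
          rw [integral_finset_sum _ fun j _ => hprod_int n k j]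
      _ = (1 / (K : ℝ)) ^ 2 * ∑ k : Fin K, ∫ y, w y * bp y ^ 2 * u n y ^ 2 ∂μ := by
          congr 1
          refine Finset.sum_congr rfl fun k _ => ?_
          rw [Finset.sum_congr rfl fun j _ => hprod_val n k j]
          simp
      _ = (1 / (K : ℝ)) * ∫ y, w y * bp y ^ 2 * u n y ^ 2 ∂μ := by
          rw [Finset.sum_const, Finset.card_univ, Fintype.card_fin, nsmul_eq_mul]
          field_simp
  -- sum over n
  rw [Finset.sum_congr rfl fun n _ => key n, ← Finset.mul_sum,
    ← integral_finset_sum _ fun n _ => hh_int n]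
  have hsum_ae : (fun y => ∑ n, w y * bp y ^ 2 * u n y ^ 2) =ᵐ[μ]
      fun y => (N : ℝ) * bp y ^ 2 := by
    filter_upwards [hSne] with y hy
    have : ∑ n, w y * bp y ^ 2 * u n y ^ 2 = w y * bp y ^ 2 * S y := by
      rw [hS]
      simp only
      rw [← Finset.mul_sum]
    rw [this, hw]
    simp only
    rw [show (∑ n, u n y ^ 2) = S y from rfl]
    field_simp
  rw [integral_congr_ae hsum_ae, integral_const_mul]
  ring
end

section
/- Let b_⊥ : I → ℝ be measurable with ∫_I b_⊥² dμ < ∞ and ∫_I b_⊥ u_n dμ = 0 for every n ∈ {1, …, N}. Fix c > 0 and δ ∈ (0,2). If K ≥ 2N/(cδ), then P[ Σ_{n=1}^N ⟨b_⊥, u_n⟩_τ² > c·∫_I b_⊥² dμ ] ≤ δ/2. -/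
open MeasureTheory ProbabilityTheory
open scoped ENNReal NNReal

/-- Markov bound on the aliasing error: if `b⊥ ∈ L²_μ` is orthogonal to
every `uₙ`, `c > 0`, `δ ∈ (0,2)` and `K ≥ 2N/(cδ)`, then
`P[Σ_n ⟨b⊥, uₙ⟩_τ² > c ∫ b⊥² dμ] ≤ δ/2`. -/
theorem stmt_7
    {I : Type*} [MeasurableSpace I] (μ : Measure I) [IsProbabilityMeasure μ]
    (N : ℕ) (u : Fin N → I → ℝ)
    (hu_meas : ∀ n, Measurable (u n))
    (hu_ortho : ∀ n m, ∫ y, u n y * u m y ∂μ = if n = m then (1 : ℝ) else 0)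
    (w : I → ℝ) (hw : w = fun y => (N : ℝ) / ∑ n, u n y ^ 2)
    (ν : Measure I)
    (hν : ν = μ.withDensity fun y =>
      ENNReal.ofReal ((1 / (N : ℝ)) * ∑ n, u n y ^ 2))
    (hμν : μ ≪ ν)
    (Ω : Type*) [MeasurableSpace Ω] (P : Measure Ω) [IsProbabilityMeasure P]
    (K : ℕ) (Y : Fin K → Ω → I)
    (hY_meas : ∀ k, Measurable (Y k))
    (hY_law : ∀ k, Measure.map (Y k) P = ν)
    (hY_indep : iIndepFun Y P)
    (bp : I → ℝ) (hbp_meas : Measurable bp)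
    (hbp_L2 : Integrable (fun y => bp y ^ 2) μ)
    (hbp_orth : ∀ n, ∫ y, bp y * u n y ∂μ = 0)
    (c δ : ℝ) (hc : 0 < c) (hδ : δ ∈ Set.Ioo (0 : ℝ) 2)
    (hK : (K : ℝ) ≥ 2 * N / (c * δ)) :
    P {ω | ∑ n : Fin N,
        ((1 / (K : ℝ)) * ∑ k, w (Y k ω) * bp (Y k ω) * u n (Y k ω)) ^ 2
        > c * ∫ y, bp y ^ 2 ∂μ}
      ≤ ENNReal.ofReal (δ / 2) := by
  obtain ⟨hδ0, hδ2⟩ := hδ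
  have hB0 : 0 ≤ ∫ y, bp y ^ 2 ∂μ := integral_nonneg fun y => sq_nonneg _
  set B : ℝ := ∫ y, bp y ^ 2 ∂μ with hBdef
  have hofδ : (0 : ENNReal) ≤ ENNReal.ofReal (δ / 2) := zero_le
  -- trivial case N = 0
  rcases Nat.eq_zero_or_pos N with hN | hN
  · subst hN
    have hempty : {ω | ∑ n : Fin 0,
        ((1 / (K : ℝ)) * ∑ k, w (Y k ω) * bp (Y k ω) * u n (Y k ω)) ^ 2
        > c * B} = (∅ : Set Ω) := by
      ext ω
      simp only [Finset.univ_eq_empty, Finset.sum_empty, Set.mem_setOf_eq,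
        Set.mem_empty_iff_false, iff_false, not_lt]
      positivity
    rw [hempty]
    simpa using hofδ
  -- main case N > 0
  have hN0 : (N : ℝ) ≠ 0 := Nat.cast_ne_zero.mpr hN.ne'
  have hNpos : (0 : ℝ) < N := Nat.cast_pos.mpr hN
  have hKpos : 0 < (K : ℝ) := by
    have h2 : 0 < 2 * (N : ℝ) / (c * δ) := by positivity
    linarith [hK]
  -- notation
  set s : I → ℝ := fun y => ∑ n, u n y ^ 2 with hsdef
  have hs_meas : Measurable s := by
    apply Finset.measurable_sum
    exact fun n _ => (hu_meas n).pow_const 2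
  have hs_nonneg : ∀ y, 0 ≤ s y := fun y => Finset.sum_nonneg fun n _ => sq_nonneg _
  set ρ : I → ℝ := fun y => (1 / (N : ℝ)) * s y with hρdef
  have hρ_nonneg : ∀ y, 0 ≤ ρ y := fun y => by
    have := hs_nonneg y; positivity
  have hρ_meas : Measurable ρ := measurable_const.mul hs_meas
  have hν' : ν = μ.withDensity fun y => ((ρ y).toNNReal : ℝ≥0∞) := by
    rw [hν]; rfl
  have hw_meas : Measurable w := by
    rw [hw]; exact measurable_const.div hs_meas
  -- change of measure for integrals
  have hInt : ∀ h : I → ℝ, ∫ y, h y ∂ν = ∫ y, ρ y * h y ∂μ := by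
    intro h
    rw [hν', integral_withDensity_eq_integral_smul hρ_meas.real_toNNReal]
    congr 1
    funext y
    rw [NNReal.smul_def, Real.coe_toNNReal _ (hρ_nonneg y), smul_eq_mul]
  -- s ≠ 0 a.e. μ
  have hms : MeasurableSet {y | s y = 0} := hs_meas (measurableSet_singleton 0)
  have hD : μ {y | s y = 0} = 0 := by
    apply hμν
    rw [hν, withDensity_apply _ hms]
    have : ∀ᵐ y ∂(μ.restrict {y | s y = 0}),
        ENNReal.ofReal ((1 / (N : ℝ)) * s y) = 0 := by
      filter_upwards [ae_restrict_mem hms] with y hy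
      have hy' : s y = 0 := hy
      simp [hy']
    rw [lintegral_congr_ae this]
    simp
  have hs_ae : ∀ᵐ y ∂μ, s y ≠ 0 := by
    apply ae_iff.mpr
    simpa only [not_ne_iff] using hD
  -- the sampled functions
  set g : Fin N → I → ℝ := fun n y => w y * bp y * u n y with hgdef
  have hg_meas : ∀ n, Measurable (g n) := fun n =>
    (hw_meas.mul hbp_meas).mul (hu_meas n)
  -- pointwise identities
  have hptR : ∀ n y, ρ y * g n y ^ 2 = w y * bp y ^ 2 * u n y ^ 2 := by
    intro n y
    have hwy : w y = (N : ℝ) / s y := by rw [hw]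
    by_cases hsy : s y = 0
    · show ρ y * (w y * bp y * u n y) ^ 2 = w y * bp y ^ 2 * u n y ^ 2
      rw [hwy, hsy, div_zero]
      ring
    · show ρ y * (w y * bp y * u n y) ^ 2 = w y * bp y ^ 2 * u n y ^ 2
      show (1 / (N : ℝ) * s y) * (w y * bp y * u n y) ^ 2 = _
      rw [hwy]
      field_simp
  have hptM : ∀ n, ∀ᵐ y ∂μ, ρ y * g n y = bp y * u n y := by
    intro n
    filter_upwards [hs_ae] with y hsy
    have hwy : w y = (N : ℝ) / s y := by rw [hw]
    show (1 / (N : ℝ) * s y) * (w y * bp y * u n y) = bp y * u n y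
    rw [hwy]
    field_simp
  have hw_nonneg : ∀ y, 0 ≤ w y := fun y => by
    rw [hw]; exact div_nonneg hNpos.le (hs_nonneg y)
  have hq_nonneg : ∀ n y, 0 ≤ w y * bp y ^ 2 * u n y ^ 2 := fun n y =>
    mul_nonneg (mul_nonneg (hw_nonneg y) (sq_nonneg _)) (sq_nonneg _)
  have hq_bound : ∀ n y, w y * bp y ^ 2 * u n y ^ 2 ≤ (N : ℝ) * bp y ^ 2 := by
    intro n y
    have h1 : w y * u n y ^ 2 ≤ (N : ℝ) := by
      by_cases hsy : s y = 0
      · have hwy : w y = (N : ℝ) / s y := by rw [hw]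
        rw [hwy, hsy, div_zero, zero_mul]; exact hNpos.le
      · have hspos : 0 < s y := lt_of_le_of_ne (hs_nonneg y) (Ne.symm hsy)
        have hwy : w y = (N : ℝ) / s y := by rw [hw]
        rw [hwy, div_mul_eq_mul_div, div_le_iff₀ hspos]
        have hu2 : u n y ^ 2 ≤ s y := by
          rw [hsdef]
          exact Finset.single_le_sum (fun m _ => sq_nonneg (u m y)) (Finset.mem_univ n)
        nlinarith
    calc w y * bp y ^ 2 * u n y ^ 2 = (w y * u n y ^ 2) * bp y ^ 2 := by ring
      _ ≤ (N : ℝ) * bp y ^ 2 := mul_le_mul_of_nonneg_right h1 (sq_nonneg _)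
  -- integrability of w bp² uₙ² over μ
  have hq_int : ∀ n, Integrable (fun y => w y * bp y ^ 2 * u n y ^ 2) μ := by
    intro n
    apply Integrable.mono' (hbp_L2.const_mul (N : ℝ))
    · exact ((hw_meas.mul (hbp_meas.pow_const 2)).mul
        ((hu_meas n).pow_const 2)).aestronglyMeasurable
    · filter_upwards with y
      rw [Real.norm_eq_abs, abs_of_nonneg (hq_nonneg n y)]
      exact hq_bound n y
  -- second moments
  set V : Fin N → ℝ := fun n => ∫ y, g n y ^ 2 ∂ν with hVdef
  have hV : ∀ n, V n = ∫ y, w y * bp y ^ 2 * u n y ^ 2 ∂μ := by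
    intro n
    rw [hVdef]
    simp only
    rw [hInt]
    exact integral_congr_ae (Filter.Eventually.of_forall fun y => hptR n y)
  have hVsum : ∑ n, V n = (N : ℝ) * B := by
    simp_rw [hV]
    rw [← integral_finset_sum _ fun n _ => hq_int n]
    have : ∀ᵐ y ∂μ, ∑ n, w y * bp y ^ 2 * u n y ^ 2 = (N : ℝ) * bp y ^ 2 := by
      filter_upwards [hs_ae] with y hsy
      have hsy' : (∑ n, u n y ^ 2) ≠ 0 := hsy
      rw [← Finset.mul_sum]
      have hwy : w y = (N : ℝ) / s y := by rw [hw]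
      show w y * bp y ^ 2 * s y = (N : ℝ) * bp y ^ 2
      rw [hwy]
      field_simp
    rw [integral_congr_ae this, integral_const_mul]
  -- integrability over ν
  have hg2_int : ∀ n, Integrable (fun y => g n y ^ 2) ν := by
    intro n
    rw [hν', integrable_withDensity_iff_integrable_smul hρ_meas.real_toNNReal]
    apply (hq_int n).congr
    filter_upwards with y
    rw [NNReal.smul_def, Real.coe_toNNReal _ (hρ_nonneg y), smul_eq_mul]
    exact (hptR n y).symm
  have hg_int : ∀ n, Integrable (g n) ν := by
    intro n
    have : IsProbabilityMeasure ν := by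
      constructor
      have hKn : 0 < K := by exact_mod_cast hKpos
      rw [← hY_law ⟨0, hKn⟩,
        Measure.map_apply (hY_meas ⟨0, hKn⟩) MeasurableSet.univ]
      simp
    apply Integrable.mono' ((hg2_int n).add (integrable_const 1))
    · exact (hg_meas n).aestronglyMeasurable
    · filter_upwards with y
      simp only [Pi.add_apply]
      rw [Real.norm_eq_abs]
      nlinarith [sq_abs (g n y), abs_nonneg (g n y), sq_nonneg (|g n y| - 1)]
  have hgmean : ∀ n, ∫ y, g n y ∂ν = 0 := by
    intro n
    rw [hInt, integral_congr_ae (hptM n), hbp_orth n]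
  -- transfer to Ω
  have hZ_int : ∀ n k, Integrable (fun ω => g n (Y k ω)) P := by
    intro n k
    have := (integrable_map_measure ((hg_meas n).aestronglyMeasurable)
      (hY_meas k).aemeasurable (μ := P)).mp
    rw [hY_law k] at this
    exact this (hg_int n)
  have hZ2_int : ∀ n k, Integrable (fun ω => g n (Y k ω) ^ 2) P := by
    intro n k
    have := (integrable_map_measure (((hg_meas n).pow_const 2).aestronglyMeasurable)
      (hY_meas k).aemeasurable (μ := P)).mp
    rw [hY_law k] at this
    exact this (hg2_int n)
  have hZmean : ∀ n k, ∫ ω, g n (Y k ω) ∂P = 0 := by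
    intro n k
    have := integral_map (hY_meas k).aemeasurable
      (f := g n) (by rw [hY_law k]; exact (hg_meas n).aestronglyMeasurable)
    rw [hY_law k] at this
    rw [← this, hgmean]
  have hZsq : ∀ n k, ∫ ω, g n (Y k ω) ^ 2 ∂P = V n := by
    intro n k
    have := integral_map (hY_meas k).aemeasurable
      (f := fun y => g n y ^ 2)
      (by rw [hY_law k]; exact ((hg_meas n).pow_const 2).aestronglyMeasurable)
    rw [hY_law k] at this
    rw [← this, hVdef]
  -- independence
  have hindep : ∀ n (k j : Fin K), k ≠ j →
      IndepFun (fun ω => g n (Y k ω)) (fun ω => g n (Y j ω)) P := by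
    intro n k j hkj
    exact (hY_indep.indepFun hkj).comp (hg_meas n) (hg_meas n)
  have hprod_int : ∀ n (k j : Fin K),
      Integrable (fun ω => g n (Y k ω) * g n (Y j ω)) P := by
    intro n k j
    by_cases hkj : k = j
    · subst hkj
      apply (hZ2_int n k).congr
      filter_upwards with ω; rw [sq]
    · exact (hindep n k j hkj).integrable_mul (hZ_int n k) (hZ_int n j)
  have hprod : ∀ n (k j : Fin K),
      ∫ ω, g n (Y k ω) * g n (Y j ω) ∂P = if k = j then V n else 0 := by
    intro n k j
    by_cases hkj : k = j
    · subst hkj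
      rw [if_pos rfl, ← hZsq n k]
      congr 1; funext ω; rw [sq]
    · rw [if_neg hkj]
      have := (hindep n k j hkj).integral_mul_eq_mul_integral
        ((hg_meas n).comp (hY_meas k)).aestronglyMeasurable
        ((hg_meas n).comp (hY_meas j)).aestronglyMeasurable
      have h2 : ∫ ω, g n (Y k ω) * g n (Y j ω) ∂P
          = (∫ ω, g n (Y k ω) ∂P) * ∫ ω, g n (Y j ω) ∂P := this
      rw [h2, hZmean, hZmean, mul_zero]
  -- expansion of the square of a sum
  have hsq_expand : ∀ n (ω : Ω), (∑ k, g n (Y k ω)) ^ 2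
      = ∑ k, ∑ j, g n (Y k ω) * g n (Y j ω) := by
    intro n ω
    rw [sq, Finset.sum_mul_sum]
  have hT2_int : ∀ n, Integrable (fun ω => (∑ k, g n (Y k ω)) ^ 2) P := by
    intro n
    apply Integrable.congr (g := fun ω => (∑ k, g n (Y k ω)) ^ 2)
      (f := fun ω => ∑ k, ∑ j, g n (Y k ω) * g n (Y j ω))
    · exact integrable_finset_sum _ fun k _ =>
        integrable_finset_sum _ fun j _ => hprod_int n k j
    · filter_upwards with ω; exact (hsq_expand n ω).symm
  have hT2 : ∀ n, ∫ ω, (∑ k, g n (Y k ω)) ^ 2 ∂P = (K : ℝ) * V n := by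
    intro n
    rw [integral_congr_ae (Filter.Eventually.of_forall (hsq_expand n))]
    rw [integral_finset_sum _ fun k _ =>
      integrable_finset_sum _ fun j _ => hprod_int n k j]
    have : ∀ k : Fin K, ∫ ω, ∑ j, g n (Y k ω) * g n (Y j ω) ∂P = V n := by
      intro k
      rw [integral_finset_sum _ fun j _ => hprod_int n k j]
      simp_rw [hprod n k]
      simp
    simp_rw [this]
    simp [mul_comm]
  -- the full statistic
  set f : Ω → ℝ := fun ω => ∑ n,
      ((1 / (K : ℝ)) * ∑ k, g n (Y k ω)) ^ 2 with hfdef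
  have hf_nonneg : ∀ ω, 0 ≤ f ω := fun ω => Finset.sum_nonneg fun n _ => sq_nonneg _
  have hfn_int : ∀ n, Integrable (fun ω =>
      ((1 / (K : ℝ)) * ∑ k, g n (Y k ω)) ^ 2) P := by
    intro n
    have : (fun ω => ((1 / (K : ℝ)) * ∑ k, g n (Y k ω)) ^ 2)
        = fun ω => (1 / (K : ℝ)) ^ 2 * (∑ k, g n (Y k ω)) ^ 2 := by
      funext ω; ring
    rw [this]
    exact (hT2_int n).const_mul _
  have hf_int : Integrable f P := integrable_finset_sum _ fun n _ => hfn_int n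
  have hf_val : ∫ ω, f ω ∂P = (N : ℝ) * B / K := by
    rw [hfdef]
    simp only
    rw [integral_finset_sum _ fun n _ => hfn_int n]
    have : ∀ n : Fin N, ∫ ω, ((1 / (K : ℝ)) * ∑ k, g n (Y k ω)) ^ 2 ∂P
        = (1 / (K : ℝ)) ^ 2 * ((K : ℝ) * V n) := by
      intro n
      rw [← hT2 n, ← integral_const_mul]
      congr 1; funext ω; ring
    simp_rw [this]
    rw [← Finset.mul_sum, ← Finset.mul_sum, hVsum]
    field_simp
  -- the event
  have hevent : {ω | ∑ n : Fin N,
      ((1 / (K : ℝ)) * ∑ k, w (Y k ω) * bp (Y k ω) * u n (Y k ω)) ^ 2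
      > c * B} = {ω | f ω > c * B} := rfl
  rw [hevent]
  by_cases hB : B = 0
  · -- f = 0 a.e.
    have hf0 : f =ᵐ[P] 0 := by
      rw [← integral_eq_zero_iff_of_nonneg_ae
        (Filter.Eventually.of_forall hf_nonneg) hf_int]
      rw [hf_val, hB, mul_zero, zero_div]
    have hsub0 : {ω | f ω > c * B} ⊆ {ω | ¬ f ω = 0} := by
      intro ω hω
      simp only [Set.mem_setOf_eq] at hω ⊢
      intro h0
      rw [h0, hB, mul_zero] at hω
      exact lt_irrefl 0 hω
    have : P {ω | f ω > c * B} = 0 :=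
      measure_mono_null hsub0 (ae_iff.mp hf0)
    rw [this]
    exact hofδ
  · have hBpos : 0 < B := lt_of_le_of_ne hB0 (Ne.symm hB)
    have hcB : 0 < c * B := mul_pos hc hBpos
    have hmarkov := mul_meas_ge_le_integral_of_nonneg
      (Filter.Eventually.of_forall hf_nonneg) hf_int (c * B)
    rw [hf_val] at hmarkov
    have hsub : {ω | f ω > c * B} ⊆ {ω | c * B ≤ f ω} :=
      Set.setOf_subset_setOf.mpr fun ω hω => le_of_lt hω
    have hle1 : P {ω | f ω > c * B} ≤ P {ω | c * B ≤ f ω} := measure_mono hsub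
    have hfin : P {ω | c * B ≤ f ω} ≠ ⊤ := measure_ne_top _ _
    have htoReal : (P {ω | c * B ≤ f ω}).toReal ≤ δ / 2 := by
      have h1 : (P {ω | c * B ≤ f ω}).toReal ≤ (N : ℝ) * B / K / (c * B) := by
        rw [le_div_iff₀ hcB]
        rw [measureReal_def] at hmarkov
        linarith [hmarkov]
      have h2 : (N : ℝ) * B / K / (c * B) = (N : ℝ) / (K * c) := by
        field_simp
      rw [h2] at h1
      have h3 : (N : ℝ) / (K * c) ≤ δ / 2 := by
        rw [ge_iff_le, div_le_iff₀ (by positivity : (0:ℝ) < c * δ)] at hK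
        rw [div_le_div_iff₀ (by positivity) (by norm_num : (0:ℝ) < 2)]
        nlinarith
      linarith
    calc P {ω | f ω > c * B} ≤ P {ω | c * B ≤ f ω} := hle1
      _ = ENNReal.ofReal ((P {ω | c * B ≤ f ω}).toReal) :=
        (ENNReal.ofReal_toReal hfin).symm
      _ ≤ ENNReal.ofReal (δ / 2) := ENNReal.ofReal_le_ofReal htoReal
end

section
/- Let ε ∈ (0,1/2) and suppose the deterministic ε-embedding property holds on V_b = span{u_1, …, u_N, b}: for every v ∈ V_b, (1 − ε)·‖v‖² ≤ ‖v‖_τ² ≤ (1 + ε)·‖v‖². Then any minimizer ṽ of v ↦ ‖v − b‖_τ over V = span{u_1, …, u_N} satisfies ‖ṽ − b‖² ≤ (1 + 2ε)·‖v* − b‖². -/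
open MeasureTheory

lemma stmt8_mul_int {I : Type*} [MeasurableSpace I] {μ : Measure I}
    {f g : I → ℝ} (hf : Measurable f) (hg : Measurable g)
    (hf2 : Integrable (fun y => f y ^ 2) μ) (hg2 : Integrable (fun y => g y ^ 2) μ) :
    Integrable (fun y => f y * g y) μ := by
  have hb : Integrable (fun y => (f y ^ 2 + g y ^ 2) / 2) μ := (hf2.add hg2).div_const 2
  refine Integrable.mono' hb ((hf.mul hg).aestronglyMeasurable) ?_
  filter_upwards with y
  rw [Real.norm_eq_abs, abs_mul]
  nlinarith [sq_nonneg (|f y| - |g y|), sq_abs (f y), sq_abs (g y), abs_nonneg (f y), abs_nonneg (g y)]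

lemma stmt8_expand {I : Type*} [MeasurableSpace I] (μ : Measure I) [IsProbabilityMeasure μ]
    (N : ℕ) (u : Fin N → I → ℝ)
    (hu_meas : ∀ n, Measurable (u n))
    (hu_ortho : ∀ n m, ∫ y, u n y * u m y ∂μ = if n = m then (1 : ℝ) else 0)
    (b : I → ℝ) (hb_meas : Measurable b)
    (hb_L2 : Integrable (fun y => b y ^ 2) μ)
    (x : Fin N → ℝ) (t : ℝ) :
    ∫ y, ((∑ n, x n * u n y) + t * b y) ^ 2 ∂μ
      = (∑ n, (x n) ^ 2) + 2 * t * (∑ n, x n * ∫ z, b z * u n z ∂μ)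
        + t ^ 2 * ∫ y, b y ^ 2 ∂μ := by
  have hu2 : ∀ n, Integrable (fun y => u n y ^ 2) μ := by
    intro n
    by_contra h
    have h0 : ∫ y, u n y * u n y ∂μ = 0 := by
      rw [integral_undef]
      intro hc
      exact h (by simpa [sq] using hc)
    rw [hu_ortho n n] at h0
    simp at h0
  have Iuu : ∀ n m, Integrable (fun y => u n y * u m y) μ := fun n m =>
    stmt8_mul_int (hu_meas n) (hu_meas m) (hu2 n) (hu2 m)
  have Ibu : ∀ n, Integrable (fun y => b y * u n y) μ := fun n =>
    stmt8_mul_int hb_meas (hu_meas n) hb_L2 (hu2 n)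
  have hpt : ∀ y, ((∑ n, x n * u n y) + t * b y) ^ 2
      = (∑ n, ∑ m, (x n * x m) * (u n y * u m y))
        + ((∑ n, (2 * t * x n) * (b y * u n y)) + t ^ 2 * b y ^ 2) := by
    intro y
    have e1 : (∑ n, x n * u n y) * (∑ m, x m * u m y)
        = ∑ n, ∑ m, (x n * x m) * (u n y * u m y) := by
      rw [Finset.sum_mul_sum]
      exact Finset.sum_congr rfl fun n _ => Finset.sum_congr rfl fun m _ => by ring
    have e2 : (∑ n, x n * u n y) * (t * b y) = ∑ n, (t * x n) * (b y * u n y) := by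
      rw [Finset.sum_mul]
      exact Finset.sum_congr rfl fun n _ => by ring
    have e3 : ∑ n, (2 * t * x n) * (b y * u n y) = 2 * ∑ n, (t * x n) * (b y * u n y) := by
      rw [Finset.mul_sum]
      exact Finset.sum_congr rfl fun n _ => by ring
    calc ((∑ n, x n * u n y) + t * b y) ^ 2
        = (∑ n, x n * u n y) * (∑ m, x m * u m y)
          + (2 * ((∑ n, x n * u n y) * (t * b y)) + t ^ 2 * b y ^ 2) := by ring
      _ = _ := by rw [e1, e2, ← e3]
  have I1 : Integrable (fun y => ∑ n, ∑ m, (x n * x m) * (u n y * u m y)) μ :=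
    integrable_finset_sum _ fun n _ => integrable_finset_sum _ fun m _ => (Iuu n m).const_mul _
  have I2 : Integrable (fun y => ∑ n, (2 * t * x n) * (b y * u n y)) μ :=
    integrable_finset_sum _ fun n _ => (Ibu n).const_mul _
  have I3 : Integrable (fun y => t ^ 2 * b y ^ 2) μ := hb_L2.const_mul _
  have I23 : Integrable (fun y => (∑ n, (2 * t * x n) * (b y * u n y)) + t ^ 2 * b y ^ 2) μ :=
    I2.add I3
  calc ∫ y, ((∑ n, x n * u n y) + t * b y) ^ 2 ∂μ
      = ∫ y, ((∑ n, ∑ m, (x n * x m) * (u n y * u m y))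
        + ((∑ n, (2 * t * x n) * (b y * u n y)) + t ^ 2 * b y ^ 2)) ∂μ :=
        integral_congr_ae (Filter.Eventually.of_forall hpt)
    _ = (∫ y, ∑ n, ∑ m, (x n * x m) * (u n y * u m y) ∂μ)
        + ((∫ y, ∑ n, (2 * t * x n) * (b y * u n y) ∂μ) + ∫ y, t ^ 2 * b y ^ 2 ∂μ) := by
        rw [integral_add I1 I23, integral_add I2 I3]
    _ = (∑ n, (x n) ^ 2) + (2 * t * (∑ n, x n * ∫ z, b z * u n z ∂μ)
        + t ^ 2 * ∫ y, b y ^ 2 ∂μ) := by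
        congr 1
        · rw [integral_finset_sum _ fun n _ => integrable_finset_sum _ fun m _ => (Iuu n m).const_mul _]
          refine Finset.sum_congr rfl fun n _ => ?_
          rw [integral_finset_sum _ fun m _ => (Iuu n m).const_mul _]
          calc ∑ m, ∫ y, (x n * x m) * (u n y * u m y) ∂μ
              = ∑ m, (x n * x m) * (if n = m then (1:ℝ) else 0) := by
                refine Finset.sum_congr rfl fun m _ => ?_
                rw [integral_const_mul, hu_ortho]
            _ = x n ^ 2 := by simp [mul_ite, Finset.sum_ite_eq, sq]
        · congr 1
          · rw [integral_finset_sum _ fun n _ => (Ibu n).const_mul _]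
            rw [Finset.mul_sum]
            refine Finset.sum_congr rfl fun n _ => ?_
            rw [integral_const_mul]
            ring
          · exact integral_const_mul _ _
    _ = _ := by ring

/-- Deterministic ε-embedding implies near-optimality: if the sketch
seminorm `‖·‖_τ` satisfies `(1−ε)‖v‖² ≤ ‖v‖_τ² ≤ (1+ε)‖v‖²` for every
`v ∈ V_b = span{u₁,…,u_N, b}` and `ε ∈ (0, 1/2)`, then any minimizer `ṽ = Σ x̃ₙ uₙ` of
`v ↦ ‖v − b‖_τ` over `V` satisfies `‖ṽ − b‖² ≤ (1 + 2ε)‖v* − b‖²`. -/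
theorem stmt_8
    {I : Type*} [MeasurableSpace I] (μ : Measure I) [IsProbabilityMeasure μ]
    (N : ℕ) (u : Fin N → I → ℝ)
    (hu_meas : ∀ n, Measurable (u n))
    (hu_ortho : ∀ n m, ∫ y, u n y * u m y ∂μ = if n = m then (1 : ℝ) else 0)
    (b : I → ℝ) (hb_meas : Measurable b)
    (hb_L2 : Integrable (fun y => b y ^ 2) μ)
    (vstar : I → ℝ)
    (hvstar : vstar = fun y => ∑ n, (∫ z, b z * u n z ∂μ) * u n y)
    -- a finitely supported nonnegative sketch measure `τ = Σ_k v_k δ_{y_k}`: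
    (K : ℕ) (v : Fin K → ℝ) (hv : ∀ k, 0 ≤ v k) (pt : Fin K → I)
    (ε : ℝ) (hε : ε ∈ Set.Ioo (0 : ℝ) (1 / 2))
    -- the ε-embedding property on `V_b`, i.e. for every `v = Σ xₙ uₙ + t·b ∈ V_b`:
    (hemb : ∀ (x : Fin N → ℝ) (t : ℝ),
      (1 - ε) * (∫ y, ((∑ n, x n * u n y) + t * b y) ^ 2 ∂μ)
          ≤ ∑ k, v k * ((∑ n, x n * u n (pt k)) + t * b (pt k)) ^ 2 ∧
      ∑ k, v k * ((∑ n, x n * u n (pt k)) + t * b (pt k)) ^ 2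
          ≤ (1 + ε) * (∫ y, ((∑ n, x n * u n y) + t * b y) ^ 2 ∂μ)) :
    ∀ xt : Fin N → ℝ,
      (∀ x : Fin N → ℝ,
        ∑ k, v k * ((∑ n, xt n * u n (pt k)) - b (pt k)) ^ 2
          ≤ ∑ k, v k * ((∑ n, x n * u n (pt k)) - b (pt k)) ^ 2) →
      ∫ y, ((∑ n, xt n * u n y) - b y) ^ 2 ∂μ
        ≤ (1 + 2 * ε) * ∫ y, (vstar y - b y) ^ 2 ∂μ := by
  intro xt hmin
  obtain ⟨hε0, hε2⟩ := hε
  have hexp := stmt8_expand μ N u hu_meas hu_ortho b hb_meas hb_L2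
  set c : Fin N → ℝ := fun n => ∫ z, b z * u n z ∂μ with hc
  have hcn : ∀ n, (∫ z, b z * u n z ∂μ) = c n := fun n => rfl
  set B : ℝ := ∫ y, b y ^ 2 ∂μ with hB
  set W : ℝ := ∑ n, (xt n - c n) ^ 2 with hW
  set E : ℝ := B - ∑ n, (c n) ^ 2 with hE
  set w : Fin K → ℝ := fun k => ∑ n, (xt n - c n) * u n (pt k) with hw
  set e : Fin K → ℝ := fun k => (∑ n, c n * u n (pt k)) - b (pt k) with he
  set a : Fin K → ℝ := fun k => (∑ n, xt n * u n (pt k)) - b (pt k) with ha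
  have hawe : ∀ k, a k = w k + e k := by
    intro k
    have hsum : (∑ n, (xt n - c n) * u n (pt k)) + ∑ n, c n * u n (pt k)
        = ∑ n, xt n * u n (pt k) := by
      rw [← Finset.sum_add_distrib]
      exact Finset.sum_congr rfl fun n _ => by ring
    rw [ha, hw, he]
    simp only
    linarith [hsum]
  -- the three integral values
  have hQ1 : ∫ y, ((∑ n, (xt n - c n) * u n y) + (0:ℝ) * b y) ^ 2 ∂μ = W := by
    have h := hexp (fun n => xt n - c n) 0
    simp only [hcn] at h
    rw [h, hW]
    ring
  have hQ2 : ∫ y, ((∑ n, (xt n - 2 * c n) * u n y) + (1:ℝ) * b y) ^ 2 ∂μ = W + E := by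
    have h := hexp (fun n => xt n - 2 * c n) 1
    simp only [hcn] at h
    rw [h, hW, hE]
    have h1 : (∑ n, (xt n - 2*c n)^2) + 2*(∑ n, (xt n - 2*c n)*(c n))
        = (∑ n, (xt n - c n)^2) - ∑ n, (c n)^2 := by
      rw [Finset.mul_sum, ← Finset.sum_add_distrib, ← Finset.sum_sub_distrib]
      exact Finset.sum_congr rfl fun n _ => by ring
    linarith [h1]
  have hQ3 : ∫ y, ((∑ n, xt n * u n y) + (-1:ℝ) * b y) ^ 2 ∂μ = W + E := by
    have h := hexp xt (-1)
    simp only [hcn] at h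
    rw [h, hW, hE]
    have h1 : (∑ n, (xt n)^2) - 2*(∑ n, (xt n)*(c n))
        = (∑ n, (xt n - c n)^2) - ∑ n, (c n)^2 := by
      rw [Finset.mul_sum, ← Finset.sum_sub_distrib, ← Finset.sum_sub_distrib]
      exact Finset.sum_congr rfl fun n _ => by ring
    linarith [h1]
  have hQvstar : ∫ y, (vstar y - b y) ^ 2 ∂μ = E := by
    have heq : ∀ y, (vstar y - b y) ^ 2 = ((∑ n, c n * u n y) + (-1:ℝ) * b y) ^ 2 := by
      intro y
      rw [hvstar]
      simp only [hcn]
      ring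
    have h := hexp c (-1)
    simp only [hcn] at h
    rw [integral_congr_ae (Filter.Eventually.of_forall heq), h, hE]
    have h1 : ∑ n, c n * c n = ∑ n, (c n)^2 := Finset.sum_congr rfl fun n _ => by ring
    linarith [h1]
  -- embedding instances
  set S1 : ℝ := ∑ k, v k * (w k) ^ 2 with hS1def
  set S2 : ℝ := ∑ k, v k * (w k - e k) ^ 2 with hS2def
  set S3 : ℝ := ∑ k, v k * (a k) ^ 2 with hS3def
  set P : ℝ := ∑ k, v k * (a k * w k) with hPdef
  have hF1 : (1 - ε) * W ≤ S1 := by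
    have h := (hemb (fun n => xt n - c n) 0).1
    rw [hQ1] at h
    have heq : ∑ k, v k * ((∑ n, (xt n - c n) * u n (pt k)) + (0:ℝ) * b (pt k)) ^ 2 = S1 := by
      rw [hS1def]
      exact Finset.sum_congr rfl fun k _ => by rw [hw]; ring
    rw [heq] at h
    exact h
  have hF2 : S2 ≤ (1 + ε) * (W + E) := by
    have h := (hemb (fun n => xt n - 2 * c n) 1).2
    rw [hQ2] at h
    have heq : ∑ k, v k * ((∑ n, (xt n - 2 * c n) * u n (pt k)) + (1:ℝ) * b (pt k)) ^ 2 = S2 := by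
      rw [hS2def]
      refine Finset.sum_congr rfl fun k _ => ?_
      have h2 : ∑ n, (xt n - 2 * c n) * u n (pt k)
          = (∑ n, (xt n - c n) * u n (pt k)) - ∑ n, c n * u n (pt k) := by
        rw [← Finset.sum_sub_distrib]
        exact Finset.sum_congr rfl fun n _ => by ring
      rw [h2, hw, he]
      simp only
      ring
    rw [heq] at h
    exact h
  have hF3 : (1 - ε) * (W + E) ≤ S3 := by
    have h := (hemb xt (-1)).1
    rw [hQ3] at h
    have heq : ∑ k, v k * ((∑ n, xt n * u n (pt k)) + (-1:ℝ) * b (pt k)) ^ 2 = S3 := by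
      rw [hS3def]
      refine Finset.sum_congr rfl fun k _ => ?_
      rw [ha]
      simp only
      ring
    rw [heq] at h
    exact h
  -- nonnegativity
  have hS1nn : 0 ≤ S1 := Finset.sum_nonneg fun k _ => mul_nonneg (hv k) (sq_nonneg _)
  have hWnn : 0 ≤ W := Finset.sum_nonneg fun n _ => sq_nonneg _
  have hEnn : 0 ≤ E := by
    rw [← hQvstar]
    exact integral_nonneg fun y => sq_nonneg _
  clear_value c B W E w e a S1 S2 S3 P
  -- normal equations: P = 0
  have hkey : ∀ s : ℝ, 0 ≤ 2 * s * P + s ^ 2 * S1 := by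
    intro s
    have h := hmin (fun n => xt n + s * (xt n - c n))
    have heq : ∀ k, (∑ n, (xt n + s * (xt n - c n)) * u n (pt k)) - b (pt k)
        = a k + s * w k := by
      intro k
      have h2 : ∑ n, (xt n + s * (xt n - c n)) * u n (pt k)
          = (∑ n, xt n * u n (pt k)) + s * ∑ n, (xt n - c n) * u n (pt k) := by
        rw [Finset.mul_sum, ← Finset.sum_add_distrib]
        exact Finset.sum_congr rfl fun n _ => by ring
      rw [h2, ha, hw]
      simp only
      ring
    have hrhs : ∑ k, v k * ((∑ n, (xt n + s * (xt n - c n)) * u n (pt k)) - b (pt k)) ^ 2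
        = S3 + (2 * s * P + s ^ 2 * S1) := by
      have h1 : ∑ k, v k * ((∑ n, (xt n + s * (xt n - c n)) * u n (pt k)) - b (pt k)) ^ 2
          = ∑ k, (v k * (a k) ^ 2 + ((2 * s) * (v k * (a k * w k)) + s ^ 2 * (v k * (w k) ^ 2))) := by
        refine Finset.sum_congr rfl fun k _ => ?_
        rw [heq k]
        ring
      rw [h1, Finset.sum_add_distrib, Finset.sum_add_distrib, ← Finset.mul_sum, ← Finset.mul_sum,
        ← hS3def, ← hPdef, ← hS1def]
    rw [hrhs] at h
    linarith
  have hP : P = 0 := by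
    have h1 := hkey (-(P) / (S1 + 1))
    have hpos : (0:ℝ) < S1 + 1 := by linarith
    have h2 : P ^ 2 * (S1 + 2) ≤ 0 := by
      field_simp at h1
      nlinarith [h1]
    nlinarith [sq_nonneg P]
  -- S3 = S2 + 4P - 4S1
  have hI1 : S3 = S2 + 4 * P - 4 * S1 := by
    have h1 : ∑ k, v k * (a k) ^ 2
        = ∑ k, (v k * (w k - e k) ^ 2 + (4 * (v k * (a k * w k)) - 4 * (v k * (w k) ^ 2))) := by
      refine Finset.sum_congr rfl fun k _ => ?_
      rw [hawe k]
      ring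
    rw [hS3def, h1, Finset.sum_add_distrib, Finset.sum_sub_distrib, ← Finset.mul_sum,
      ← Finset.mul_sum, ← hS2def, ← hPdef, ← hS1def]
    ring
  -- final assembly
  have hgoal1 : ∫ y, ((∑ n, xt n * u n y) - b y) ^ 2 ∂μ = W + E := by
    have heq : ∀ y, ((∑ n, xt n * u n y) - b y) ^ 2
        = ((∑ n, xt n * u n y) + (-1:ℝ) * b y) ^ 2 := fun y => by ring
    rw [integral_congr_ae (Filter.Eventually.of_forall heq), hQ3]
  rw [hgoal1, hQvstar]
  have hA : 4 * S1 ≤ 2 * ε * (W + E) := by linarith [hF2, hF3, hI1, hP]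
  have hWE : (4 - 6 * ε) * W ≤ 2 * ε * E := by linarith [hA, hF1]
  have hW2 : W ≤ 2 * ε * E := by
    linarith [hWE, mul_nonneg (by linarith : (0:ℝ) ≤ 3 - 6 * ε) hWnn]
  linarith
end

section
/- Suppose J ⊆ Π_{d=1}^D {1, …, N_d} is monotone lower. Then the family of product functions {q_α : α ∈ J} is orthonormal in L²_μ(I) and spans the same subspace of L²_μ(I) as {a_α : α ∈ J}; that is, {q_α : α ∈ J} is an L²_μ(I)-orthonormal basis of V = span{a_α : α ∈ J}. -/
/-!
Orthonormality of the products `q_α` follows from Fubini: the integral of a product of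
one-variable functions over the product measure factors into one-dimensional integrals.
For the spans, expanding each factor of `a_α` in the `q⁽ᵈ⁾` gives
`a_α = ∑_β (∏_d R⁽ᵈ⁾_{β_d, α_d}) q_β`, and upper triangularity kills every term with
`β ≰ α`, so only indices of the lower set `J` occur. The same argument applied to the
inverse matrices, which are again upper triangular, gives the reverse inclusion.
-/

open MeasureTheory Finset

theorem integral_prod_mul_prod_of_orthonormal {ι : Type*} [Fintype ι] {X κ : ι → Type*}
    [∀ i, DecidableEq (κ i)] [∀ i, MeasurableSpace (X i)] {μ : ∀ i, Measure (X i)}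
    [∀ i, SigmaFinite (μ i)]
    (f : ∀ i, κ i → X i → ℝ)
    (hf : ∀ i j k, ∫ t, f i j t * f i k t ∂(μ i) = if j = k then (1 : ℝ) else 0)
    (α β : ∀ i, κ i) :
    ∫ y, (∏ i, f i (α i) (y i)) * (∏ i, f i (β i) (y i)) ∂(Measure.pi μ)
      = if α = β then (1 : ℝ) else 0 := by
  simp_rw [← prod_mul_distrib]
  rw [integral_fintype_prod_eq_prod (fun i t => f i (α i) t * f i (β i) t)]
  simp_rw [hf, Fintype.prod_boole, funext_iff]

theorem Matrix.eq_sum_inv_smul_of_eq_sum_smul {n R M : Type*} [Fintype n] [DecidableEq n]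
    [CommRing R] [AddCommGroup M] [Module R M] {A : Matrix n n R} (hA : IsUnit A.det)
    {v w : n → M} (hw : ∀ j, w j = ∑ k, A k j • v k) (j : n) :
    v j = ∑ k, A⁻¹ k j • w k := by
  calc v j = ∑ m, (A * A⁻¹) m j • v m := by
        simp [Matrix.mul_nonsing_inv A hA, Matrix.one_apply]
    _ = ∑ k, A⁻¹ k j • w k := by
        simp_rw [hw, smul_sum, smul_smul, Matrix.mul_apply, sum_smul]
        rw [sum_comm]
        simp_rw [mul_comm]

section Triangular

variable {ι : Type*} [Fintype ι] [DecidableEq ι] {κ X : ι → Type*} [∀ i, Fintype (κ i)]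
  {R : Type*} [CommRing R]

theorem prod_eq_sum_prod_smul_prod (f g : ∀ i, κ i → X i → R) (C : ∀ i, Matrix (κ i) (κ i) R)
    (hg : ∀ i j, g i j = ∑ k, C i k j • f i k) (α : ∀ i, κ i) :
    (fun y : ∀ i, X i => ∏ i, g i (α i) (y i))
      = ∑ β : ∀ i, κ i, (∏ i, C i (β i) (α i)) • fun y => ∏ i, f i (β i) (y i) := by
  ext y
  simp only [hg, Finset.sum_apply, Pi.smul_apply, smul_eq_mul, Fintype.prod_sum,
    ← prod_mul_distrib]

theorem span_prod_le_of_blockTriangular [∀ i, LinearOrder (κ i)] (f g : ∀ i, κ i → X i → R)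
    (C : ∀ i, Matrix (κ i) (κ i) R) (hC : ∀ i, (C i).BlockTriangular id)
    (hg : ∀ i j, g i j = ∑ k, C i k j • f i k) {J : Set (∀ i, κ i)} (hJ : IsLowerSet J) :
    Submodule.span R {h | ∃ α ∈ J, h = fun y : ∀ i, X i => ∏ i, g i (α i) (y i)}
      ≤ Submodule.span R {h | ∃ α ∈ J, h = fun y : ∀ i, X i => ∏ i, f i (α i) (y i)} := by
  rw [Submodule.span_le]
  rintro _ ⟨α, hα, rfl⟩
  rw [prod_eq_sum_prod_smul_prod f g C hg]
  refine Submodule.sum_mem _ fun β _ => ?_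
  by_cases hβα : β ≤ α
  · exact Submodule.smul_mem _ _ (Submodule.subset_span ⟨β, hJ hβα hα, rfl⟩)
  · obtain ⟨i, hi⟩ : ∃ i, α i < β i := by simpa [Pi.le_def] using hβα
    rw [prod_eq_zero (mem_univ i) (hC i hi), zero_smul]
    exact Submodule.zero_mem _

end Triangular

theorem stmt_14_general (D : ℕ) (I : Fin D → Type*) [∀ d, MeasurableSpace (I d)]
    (μ : ∀ d, Measure (I d)) [∀ d, IsProbabilityMeasure (μ d)]
    (N : Fin D → ℕ) (q : ∀ d, Fin (N d) → I d → ℝ)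
    (hq_ortho : ∀ d j k,
      ∫ t, q d j t * q d k t ∂(μ d) = if j = k then (1 : ℝ) else 0)
    (R : ∀ d, Matrix (Fin (N d)) (Fin (N d)) ℝ)
    (hR_upper : ∀ d (k j : Fin (N d)), j < k → R d k j = 0)
    (hR_inv : ∀ d, IsUnit (R d).det)
    (a : ∀ d, Fin (N d) → I d → ℝ)
    (ha : ∀ d j, a d j = fun t => ∑ k, R d k j * q d k t)
    (J : Set (∀ d, Fin (N d)))
    (hJ_lower : ∀ α ∈ J, ∀ β : ∀ d, Fin (N d), (∀ d, β d ≤ α d) → β ∈ J) :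
    (∀ α ∈ J, ∀ β ∈ J,
      ∫ y, (∏ d, q d (α d) (y d)) * (∏ d, q d (β d) (y d)) ∂(Measure.pi μ)
        = if α = β then (1 : ℝ) else 0) ∧
    Submodule.span ℝ {f : (∀ d, I d) → ℝ | ∃ α ∈ J, f = fun y => ∏ d, a d (α d) (y d)}
      = Submodule.span ℝ
        {f : (∀ d, I d) → ℝ | ∃ α ∈ J, f = fun y => ∏ d, q d (α d) (y d)} := by
  have hJ : IsLowerSet J := fun α β hβα hα => hJ_lower α hα β hβα
  have hR : ∀ d, (R d).BlockTriangular id := fun d k j => hR_upper d k j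
  have hR' : ∀ d, (R d)⁻¹.BlockTriangular id := fun d =>
    haveI := (R d).invertibleOfIsUnitDet (hR_inv d)
    Matrix.blockTriangular_inv_of_blockTriangular (hR d)
  have ha' : ∀ d j, a d j = ∑ k, R d k j • q d k := fun d j => by
    ext t
    simp [ha, Finset.sum_apply]
  refine ⟨fun α _ β _ => integral_prod_mul_prod_of_orthonormal q hq_ortho α β,
    le_antisymm (span_prod_le_of_blockTriangular q a R hR ha' hJ) ?_⟩
  exact span_prod_le_of_blockTriangular a q (fun d => (R d)⁻¹) hR'
    (fun d => Matrix.eq_sum_inv_smul_of_eq_sum_smul (hR_inv d) (ha' d)) hJ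

/-- If `J` is a monotone lower (downward closed) set of multi-indices,
the product functions `{q_α : α ∈ J}` form an `L²_μ(I)`-orthonormal basis of
`V = span{a_α : α ∈ J}`, where `a_j⁽ᵈ⁾ = Σ_k R⁽ᵈ⁾_{k,j} q_k⁽ᵈ⁾` with `R⁽ᵈ⁾` invertible
upper triangular: they are orthonormal and span the same subspace as `{a_α : α ∈ J}`. -/
theorem stmt_14 (D : ℕ) (I : Fin D → Type*) [∀ d, MeasurableSpace (I d)]
    (μ : ∀ d, Measure (I d)) [∀ d, IsProbabilityMeasure (μ d)]
    (N : Fin D → ℕ) (q : ∀ d, Fin (N d) → I d → ℝ)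
    (hq_meas : ∀ d j, Measurable (q d j))
    (hq_ortho : ∀ d j k,
      ∫ t, q d j t * q d k t ∂(μ d) = if j = k then (1 : ℝ) else 0)
    (R : ∀ d, Matrix (Fin (N d)) (Fin (N d)) ℝ)
    (hR_upper : ∀ d (k j : Fin (N d)), j < k → R d k j = 0)
    (hR_inv : ∀ d, IsUnit (R d).det)
    (a : ∀ d, Fin (N d) → I d → ℝ)
    (ha : ∀ d j, a d j = fun t => ∑ k, R d k j * q d k t)
    (J : Set (∀ d, Fin (N d)))
    (hJ_lower : ∀ α ∈ J, ∀ β : ∀ d, Fin (N d), (∀ d, β d ≤ α d) → β ∈ J) :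
    (∀ α ∈ J, ∀ β ∈ J,
      ∫ y, (∏ d, q d (α d) (y d)) * (∏ d, q d (β d) (y d)) ∂(Measure.pi μ)
        = if α = β then (1 : ℝ) else 0) ∧
    Submodule.span ℝ {f : (∀ d, I d) → ℝ | ∃ α ∈ J, f = fun y => ∏ d, a d (α d) (y d)}
      = Submodule.span ℝ
        {f : (∀ d, I d) → ℝ | ∃ α ∈ J, f = fun y => ∏ d, q d (α d) (y d)} :=
  stmt_14_general D I μ N q hq_ortho R hR_upper hR_inv a ha J hJ_lower
end
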